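/- Let n ≥ 2 be a natural number, let a₁, …, aₙ be a probability vector, let 1 ≤ k < n, let 1/2 < p < 1, and set q = Σ_{j=1}^{k} aⱼ. Suppose |q − 1/2| ≤ ε where ε = √(1/(24·log₂(n))). Let N⁻¹ = p·q + (1−p)·(1−q) and M⁻¹ = p·(1−q) + (1−p)·q, and let b⁰ and b¹ be the Bayes updates of a at k with parameter p. Then the expected information increase satisfies N⁻¹·(H(a) − H(b⁰)) + M⁻¹·(H(a) − H(b¹)) ≥ I(p)·(1 − 1/(3·log₂(n))), where I(p) = 1 − H₂(p). -/

import Mathlib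

/-!
The expected entropy decrease is exactly `H₂(N⁻¹) − H₂(p) = I(p) − I(N⁻¹)`: expanding
`H(b⁰)` and `H(b¹)`, every term depending on `a` cancels because `N⁻¹ + M⁻¹ = 1` (it is the
mutual information between the hidden index and the noisy answer). In nats, `log 2 − H(x)` is
squeezed between `(2x − 1)² / 2` (binary Pinsker) and `(2x − 1)²` (`log y ≤ y − 1`). Since
`2N⁻¹ − 1 = (2p − 1)(2q − 1)` and `(2q − 1)² ≤ 4ε² = 1 / (6 log₂ n)`, this gives
`I(N⁻¹) ≤ I(p) / (3 log₂ n)`.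
-/

/-- Shannon entropy (base 2) of a vector `a` indexed by `0, …, n-1`:
`H(a) = −Σᵢ aᵢ·log₂(aᵢ)`, with the convention `0·log₂(0) = 0`. -/
noncomputable def shannonEntropy (n : ℕ) (a : ℕ → ℝ) : ℝ :=
  ∑ i ∈ Finset.range n, -(a i * Real.logb 2 (a i))

/-- Binary entropy `H₂(x) = −x·log₂(x) − (1−x)·log₂(1−x)`,
with the convention `0·log₂(0) = 0`. -/
noncomputable def binEntropy (x : ℝ) : ℝ :=
  -x * Real.logb 2 x - (1 - x) * Real.logb 2 (1 - x)

open Finset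

lemma shannonEntropy_eq_sum_negMulLog_div (n : ℕ) (a : ℕ → ℝ) :
    shannonEntropy n a = (∑ i ∈ range n, Real.negMulLog (a i)) / Real.log 2 := by
  simp only [shannonEntropy, Real.negMulLog, Real.logb, sum_div]
  refine sum_congr rfl fun i _ => by ring

lemma binEntropy_eq_div_log_two (x : ℝ) : binEntropy x = Real.binEntropy x / Real.log 2 := by
  simp only [binEntropy, Real.binEntropy_eq_negMulLog_add_negMulLog_one_sub, Real.negMulLog,
    Real.logb]
  ring

lemma mul_negMulLog_mul_div (c a : ℝ) {Z : ℝ} (hZ : Z ≠ 0) :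
    Z * Real.negMulLog (c * a / Z) =
      a * Real.negMulLog c + c * Real.negMulLog a + c * a * Real.log Z := by
  have hinv : Real.negMulLog Z⁻¹ = Z⁻¹ * Real.log Z := by simp [Real.negMulLog, Real.log_inv]
  rw [div_eq_mul_inv, Real.negMulLog_mul, Real.negMulLog_mul, hinv]
  field_simp

lemma mul_sum_negMulLog_piecewise {n k : ℕ} (hkn : k ≤ n) (a b : ℕ → ℝ) (c d : ℝ) {Z : ℝ}
    (hZ : Z ≠ 0) (hb : ∀ j, b j = if j < k then c * a j / Z else d * a j / Z) :
    Z * ∑ i ∈ range n, Real.negMulLog (b i) =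
      (∑ i ∈ range k, a i) * Real.negMulLog c + c * ∑ i ∈ range k, Real.negMulLog (a i)
      + ((∑ i ∈ Ico k n, a i) * Real.negMulLog d + d * ∑ i ∈ Ico k n, Real.negMulLog (a i))
      + (c * ∑ i ∈ range k, a i + d * ∑ i ∈ Ico k n, a i) * Real.log Z := by
  rw [← sum_range_add_sum_Ico _ hkn, mul_add]
  have h₁ : Z * ∑ i ∈ range k, Real.negMulLog (b i) = ∑ i ∈ range k,
      (a i * Real.negMulLog c + c * Real.negMulLog (a i) + c * a i * Real.log Z) := by
    rw [mul_sum]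
    refine sum_congr rfl fun i hi => ?_
    rw [hb, if_pos (mem_range.1 hi), mul_negMulLog_mul_div _ _ hZ]
  have h₂ : Z * ∑ i ∈ Ico k n, Real.negMulLog (b i) = ∑ i ∈ Ico k n,
      (a i * Real.negMulLog d + d * Real.negMulLog (a i) + d * a i * Real.log Z) := by
    rw [mul_sum]
    refine sum_congr rfl fun i hi => ?_
    rw [hb, if_neg (not_lt.2 (mem_Ico.1 hi).1), mul_negMulLog_mul_div _ _ hZ]
  rw [h₁, h₂]
  simp only [sum_add_distrib, ← sum_mul, ← mul_sum]
  ring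

lemma expected_entropy_decrease_eq {n k : ℕ} (hkn : k ≤ n) (a : ℕ → ℝ)
    (ha1 : ∑ i ∈ range n, a i = 1) (p q : ℝ) (hq : q = ∑ j ∈ range k, a j) (Ninv Minv : ℝ)
    (hN : Ninv = p * q + (1 - p) * (1 - q)) (hM : Minv = p * (1 - q) + (1 - p) * q)
    (hN0 : Ninv ≠ 0) (hM0 : Minv ≠ 0) (b0 b1 : ℕ → ℝ)
    (hb0 : ∀ j, b0 j = if j < k then p * a j / Ninv else (1 - p) * a j / Ninv)
    (hb1 : ∀ j, b1 j = if j < k then (1 - p) * a j / Minv else p * a j / Minv) :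
    Ninv * (shannonEntropy n a - shannonEntropy n b0)
      + Minv * (shannonEntropy n a - shannonEntropy n b1) = binEntropy Ninv - binEntropy p := by
  have hsplit : ∑ i ∈ Ico k n, a i = 1 - q := by
    rw [← ha1, ← sum_range_add_sum_Ico _ hkn, hq]; ring
  have e₀ := mul_sum_negMulLog_piecewise hkn a b0 p (1 - p) hN0 hb0
  have e₁ := mul_sum_negMulLog_piecewise hkn a b1 (1 - p) p hM0 hb1
  rw [← hq, hsplit] at e₀ e₁
  have hMN : Minv = 1 - Ninv := by rw [hM, hN]; ring
  have hHa : ∑ i ∈ range n, Real.negMulLog (a i) =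
      ∑ i ∈ range k, Real.negMulLog (a i) + ∑ i ∈ Ico k n, Real.negMulLog (a i) :=
    (sum_range_add_sum_Ico _ hkn).symm
  simp only [shannonEntropy_eq_sum_negMulLog_div, binEntropy_eq_div_log_two,
    Real.binEntropy_eq_negMulLog_add_negMulLog_one_sub, ← sub_div, mul_div_assoc', ← add_div]
  congr 1
  have hηN : Real.negMulLog Ninv = -Ninv * Real.log Ninv := rfl
  have hηM : Real.negMulLog Minv = -Minv * Real.log Minv := rfl
  rw [← hMN, hHa, hηN, hηM]
  linear_combination (-1 : ℝ) * e₀ - e₁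
    + (∑ i ∈ range k, Real.negMulLog (a i) + ∑ i ∈ Ico k n, Real.negMulLog (a i)) * hMN
    + Real.log Ninv * hN + Real.log Minv * hM

lemma two_mul_le_log_one_add_sub_log_one_sub {s : ℝ} (hs0 : 0 ≤ s) (hs1 : s < 1) :
    2 * s ≤ Real.log (1 + s) - Real.log (1 - s) := by
  have hsum := Real.hasSum_log_sub_log_of_abs_lt_one (abs_lt.mpr ⟨by linarith, hs1⟩)
  simpa using le_hasSum hsum 0 fun k _ => by positivity

lemma log_two_sub_binEntropy_le {x : ℝ} (hx0 : 0 < x) (hx1 : x < 1) :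
    Real.log 2 - Real.binEntropy x ≤ (2 * x - 1) ^ 2 := by
  have h₁ := Real.log_le_sub_one_of_pos (by positivity : 0 < 2 * x)
  have h₂ := Real.log_le_sub_one_of_pos (by linarith : 0 < 2 * (1 - x))
  rw [Real.log_mul two_ne_zero hx0.ne'] at h₁
  rw [Real.log_mul two_ne_zero (by linarith)] at h₂
  rw [Real.binEntropy_eq_negMulLog_add_negMulLog_one_sub, Real.negMulLog, Real.negMulLog]
  nlinarith [mul_le_mul_of_nonneg_left h₁ hx0.le,
    mul_le_mul_of_nonneg_left h₂ (sub_nonneg.2 hx1.le)]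

lemma two_mul_sq_le_log_two_sub_binEntropy {x : ℝ} (hx0 : 0 ≤ x) (hx1 : x ≤ 1) :
    2 * (x - 1 / 2) ^ 2 ≤ Real.log 2 - Real.binEntropy x := by
  wlog hx : 1 / 2 ≤ x generalizing x
  · have := this (x := 1 - x) (by linarith) (by linarith) (by linarith)
    rw [Real.binEntropy_one_sub] at this
    linarith
  let f : ℝ → ℝ := fun y => Real.log 2 - Real.binEntropy y - 2 * (y - 1 / 2) ^ 2
  have hmono : MonotoneOn f (Set.Icc (1 / 2) 1) := by
    refine monotoneOn_of_hasDerivWithinAt_nonneg (f' := fun y =>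
        -(Real.log (1 - y) - Real.log y) - 2 * (2 * (y - 1 / 2))) (convex_Icc _ _)
      (by fun_prop) (fun y hy => ?_) (fun y hy => ?_) <;>
      rw [interior_Icc] at hy <;> obtain ⟨hy0, hy1⟩ := hy
    · refine HasDerivAt.hasDerivWithinAt ?_
      have hH := (Real.hasDerivAt_binEntropy (by linarith) (by linarith)).const_sub (Real.log 2)
      have hsq := ((hasDerivAt_id y).sub_const (1 / 2)).pow 2 |>.const_mul 2
      exact hH.sub (hsq.congr_deriv (by simp))
    · -- with `s = 2y - 1` the derivative is `log (1 + s) - log (1 - s) - 2s = 2 (artanh s - s)`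
      have := two_mul_le_log_one_add_sub_log_one_sub (s := 2 * y - 1) (by linarith) (by linarith)
      have e₁ : Real.log (1 + (2 * y - 1)) = Real.log 2 + Real.log y := by
        rw [← Real.log_mul two_ne_zero (by linarith)]; ring_nf
      have e₂ : Real.log (1 - (2 * y - 1)) = Real.log 2 + Real.log (1 - y) := by
        rw [← Real.log_mul two_ne_zero (by linarith)]; ring_nf
      linarith
  have := hmono ⟨le_rfl, by norm_num⟩ ⟨hx, hx1⟩ hx
  simp only [f, one_div, Real.binEntropy_two_inv] at this
  linarith

lemma mul_add_one_sub_mul_one_sub_mem_Ioo {p q : ℝ} (hp0 : 0 ≤ p) (hp1 : p ≤ 1) (hq0 : 0 < q)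
    (hq1 : q < 1) : p * q + (1 - p) * (1 - q) ∈ Set.Ioo 0 1 := by
  -- `N - q (1 - q) = p q² + (1 - p) (1 - q)²`, `1 - N - q (1 - q) = p (1 - q)² + (1 - p) q²`
  have hq := mul_pos hq0 (sub_pos.2 hq1)
  have h₁ := mul_nonneg hp0 (sq_nonneg q)
  have h₂ := mul_nonneg hp0 (sq_nonneg (1 - q))
  have h₃ := mul_nonneg (sub_nonneg.2 hp1) (sq_nonneg q)
  have h₄ := mul_nonneg (sub_nonneg.2 hp1) (sq_nonneg (1 - q))
  constructor <;> nlinarith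

lemma one_sub_binEntropy_mix_le {p q L : ℝ} (hp0 : 0 ≤ p) (hp1 : p ≤ 1) (hq0 : 0 < q)
    (hq1 : q < 1) (hL : 0 < L) (hq : 6 * L * (2 * q - 1) ^ 2 ≤ 1) :
    1 - binEntropy (p * q + (1 - p) * (1 - q)) ≤ (1 - binEntropy p) / (3 * L) := by
  obtain ⟨hN0, hN1⟩ := mul_add_one_sub_mul_one_sub_mem_Ioo hp0 hp1 hq0 hq1
  have hupper := log_two_sub_binEntropy_le hN0 hN1
  have hlower := two_mul_sq_le_log_two_sub_binEntropy hp0 hp1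
  have hmix : 2 * (p * q + (1 - p) * (1 - q)) - 1 = (2 * p - 1) * (2 * q - 1) := by ring
  rw [hmix] at hupper
  have key : 3 * L * (Real.log 2 - Real.binEntropy (p * q + (1 - p) * (1 - q)))
      ≤ Real.log 2 - Real.binEntropy p :=
    calc 3 * L * (Real.log 2 - Real.binEntropy (p * q + (1 - p) * (1 - q)))
        ≤ 3 * L * ((2 * p - 1) * (2 * q - 1)) ^ 2 := by gcongr
      _ = (2 * p - 1) ^ 2 / 2 * (6 * L * (2 * q - 1) ^ 2) := by ring
      _ ≤ 2 * (p - 1 / 2) ^ 2 := by nlinarith [sq_nonneg (2 * p - 1)]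
      _ ≤ _ := hlower
  have hlog2 : 0 < Real.log 2 := Real.log_pos one_lt_two
  have hbits (x : ℝ) : 1 - binEntropy x = (Real.log 2 - Real.binEntropy x) / Real.log 2 := by
    rw [binEntropy_eq_div_log_two]; field_simp
  rw [hbits, hbits, le_div_iff₀ (by positivity), div_mul_eq_mul_div,
    div_le_div_iff_of_pos_right hlog2]
  linarith

theorem bayes_update_information_gain_with_eps_par_general (n k : ℕ) (hn : 2 ≤ n)
    (a : ℕ → ℝ) (p : ℝ)
    (hkn : k < n)
    (ha1 : ∑ i ∈ Finset.range n, a i = 1)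
    (hp0 : 1/2 < p) (hp1 : p < 1)
    (q : ℝ) (hq : q = ∑ j ∈ Finset.range k, a j)
    (ε : ℝ) (hε : ε = Real.sqrt (1 / (24 * Real.logb 2 n)))
    (hqε : |q - 1/2| ≤ ε)
    (Ninv Minv : ℝ)
    (hN : Ninv = p * q + (1 - p) * (1 - q))
    (hM : Minv = p * (1 - q) + (1 - p) * q)
    (b0 b1 : ℕ → ℝ)
    (hb0 : ∀ j, b0 j = if j < k then p * a j / Ninv else (1 - p) * a j / Ninv)
    (hb1 : ∀ j, b1 j = if j < k then (1 - p) * a j / Minv else p * a j / Minv) :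
    Ninv * (shannonEntropy n a - shannonEntropy n b0)
      + Minv * (shannonEntropy n a - shannonEntropy n b1)
      ≥ (1 - binEntropy p) * (1 - 1 / (3 * Real.logb 2 n)) := by
  set L := Real.logb 2 n
  have hL : 1 ≤ L := by
    rw [← Real.logb_self_eq_one one_lt_two]
    exact Real.logb_le_logb_of_le one_lt_two two_pos (by exact_mod_cast hn)
  have hq6 : 6 * L * (2 * q - 1) ^ 2 ≤ 1 := by
    have hε2 : ε ^ 2 = 1 / (24 * L) := by rw [hε, Real.sq_sqrt (by positivity)]
    have := sq_le_sq' (abs_le.1 hqε).1 (abs_le.1 hqε).2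
    rw [hε2, le_div_iff₀ (by positivity)] at this
    linarith
  have hq0 : 0 < q := by nlinarith
  have hq1 : q < 1 := by nlinarith
  have hN01 := hN ▸ mul_add_one_sub_mul_one_sub_mem_Ioo (by linarith) hp1.le hq0 hq1
  have hM01 := mul_add_one_sub_mul_one_sub_mem_Ioo (q := 1 - q) (by linarith) hp1.le
    (by linarith) (by linarith)
  rw [sub_sub_cancel, ← hM] at hM01
  have hIN := hN ▸ one_sub_binEntropy_mix_le (by linarith) hp1.le hq0 hq1 (by linarith) hq6
  rw [expected_entropy_decrease_eq hkn.le a ha1 p q hq Ninv Minv hN hM hN01.1.ne' hM01.1.ne'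
    b0 b1 hb0 hb1, mul_one_sub, mul_one_div]
  linarith

/-- Let `n ≥ 2`, let `a` be a probability vector on `{1,…,n}`
(indexed here by `0, …, n-1`), `1 ≤ k < n`, `1/2 < p < 1`, `q = Σ_{j=1}^{k} aⱼ`, and
suppose `|q − 1/2| ≤ ε` where `ε = √(1/(24·log₂ n))`. Let `N⁻¹ = p·q + (1−p)·(1−q)`,
`M⁻¹ = p·(1−q) + (1−p)·q`, and let `b⁰, b¹` be the Bayes updates of `a` at `k` with
parameter `p`. Then the expected information increase satisfies
`N⁻¹·(H(a) − H(b⁰)) + M⁻¹·(H(a) − H(b¹)) ≥ I(p)·(1 − 1/(3·log₂ n))`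
where `I(p) = 1 − H₂(p)`. -/
theorem bayes_update_information_gain_with_eps_par (n k : ℕ) (hn : 2 ≤ n)
    (a : ℕ → ℝ) (p : ℝ)
    (hk1 : 1 ≤ k) (hkn : k < n)
    (ha0 : ∀ i ∈ Finset.range n, 0 ≤ a i)
    (ha1 : ∑ i ∈ Finset.range n, a i = 1)
    (hp0 : 1/2 < p) (hp1 : p < 1)
    (q : ℝ) (hq : q = ∑ j ∈ Finset.range k, a j)
    (ε : ℝ) (hε : ε = Real.sqrt (1 / (24 * Real.logb 2 n)))
    (hqε : |q - 1/2| ≤ ε)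
    (Ninv Minv : ℝ)
    (hN : Ninv = p * q + (1 - p) * (1 - q))
    (hM : Minv = p * (1 - q) + (1 - p) * q)
    (b0 b1 : ℕ → ℝ)
    (hb0 : ∀ j, b0 j = if j < k then p * a j / Ninv else (1 - p) * a j / Ninv)
    (hb1 : ∀ j, b1 j = if j < k then (1 - p) * a j / Minv else p * a j / Minv) :
    Ninv * (shannonEntropy n a - shannonEntropy n b0)
      + Minv * (shannonEntropy n a - shannonEntropy n b1)
      ≥ (1 - binEntropy p) * (1 - 1 / (3 * Real.logb 2 n)) :=
  bayes_update_information_gain_with_eps_par_general n k hn a p hkn ha1 hp0 hp1 q hq ε hε hqε Ninv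
    Minv hN hM b0 b1 hb0 hb1
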